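/- Let X, Y be integrable real random variables, h(p) = F⁻¹_Y(p) − F⁻¹_X(p) for p ∈ (0,1), l(p) = F^{(−2)}_Y(p) − F^{(−2)}_X(p) for p ∈ [0,1], and A = {p ∈ (0,1] : l(q) < l(p) for all q < p}. Suppose p ↦ sign(h(p)) has at most finitely many discontinuity points on (0,1). Then for every p ∈ [0,1], ∫_{A ∩ (0,p]} h(t) dt = sup_{q ∈ [0,p]} l(q); in particular ∫_{A ∩ (0,1]} h(t) dt = sup_{q ∈ [0,1]} l(q). -/

import Mathlib

open MeasureTheory Filter Set

noncomputable section

/-- Distribution function `F_Z(η) = P(Z ≤ η)`. -/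
def cdfRV {Ω : Type*} [MeasurableSpace Ω] (P : Measure Ω) (Z : Ω → ℝ) (η : ℝ) : ℝ :=
  (P {ω | Z ω ≤ η}).toReal

/-- Quantile function `F⁻¹_Z(p) = inf {η | F_Z(η) ≥ p}`. -/
def qf {Ω : Type*} [MeasurableSpace Ω] (P : Measure Ω) (Z : Ω → ℝ) (p : ℝ) : ℝ :=
  sInf {η : ℝ | p ≤ cdfRV P Z η}

/-- Absolute Lorenz function `F^{(-2)}_Z(p) = ∫₀^p F⁻¹_Z(t) dt`. -/
def lorenz {Ω : Type*} [MeasurableSpace Ω] (P : Measure Ω) (Z : Ω → ℝ) (p : ℝ) : ℝ :=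
  ∫ t in (0:ℝ)..p, qf P Z t

/-- Shortfall function `F^{(2)}_Z(η) = E[max(η - Z, 0)]`. -/
def shortfall {Ω : Type*} [MeasurableSpace Ω] (P : Measure Ω) (Z : Ω → ℝ) (η : ℝ) : ℝ :=
  ∫ ω, max (η - Z ω) 0 ∂P

/-- Second-order stochastic dominance. -/
def SSD {Ω : Type*} [MeasurableSpace Ω] (P : Measure Ω) (Z Y : Ω → ℝ) : Prop :=
  ∀ η : ℝ, shortfall P Z η ≤ shortfall P Y η

/-- First-order Wasserstein distance. -/
def W1 {Ω : Type*} [MeasurableSpace Ω] (P : Measure Ω) (X Z : Ω → ℝ) : ℝ :=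
  ∫ p in (0:ℝ)..1, |qf P X p - qf P Z p|

/-- Distance from `X` to the set `A₂(Y)` of integrable random variables dominating `Y`
in the second order, in terms of `W₁`. -/
def distA2 {Ω : Type*} [MeasurableSpace Ω] (P : Measure Ω) (X Y : Ω → ℝ) : ℝ :=
  sInf {d : ℝ | ∃ Z : Ω → ℝ, Integrable Z P ∧ SSD P Z Y ∧ d = W1 P X Z}

/-- An atomless probability space. -/
def Atomless {Ω : Type*} [MeasurableSpace Ω] (P : Measure Ω) : Prop :=
  ∀ s : Set Ω, MeasurableSet s → P s ≠ 0 →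
    ∃ t : Set Ω, t ⊆ s ∧ MeasurableSet t ∧ 0 < P t ∧ P t < P s

/-- `r`-th order shortfall transform `F^{(r)}_Z(η) = (1/Γ(r)) E[max(η-Z,0)^{r-1}]`,
with the convention `max(η-z,0)^0 = 𝟙_{z ≤ η}`. -/
def sfr {Ω : Type*} [MeasurableSpace Ω] (P : Measure Ω) (Z : Ω → ℝ) (r η : ℝ) : ℝ :=
  (1 / Real.Gamma r) * ∫ ω, (if Z ω ≤ η then (η - Z ω) ^ (r - 1) else 0) ∂P

/-- `r`-th order stochastic dominance: `Z ≽_{(r)} Y`. -/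
def domR {Ω : Type*} [MeasurableSpace Ω] (P : Measure Ω) (Z Y : Ω → ℝ) (r : ℝ) : Prop :=
  ∀ η : ℝ, sfr P Z r η ≤ sfr P Y r η

/-!
The quantile function of a probability measure `μ` on `ℝ` pushes Lebesgue measure on `(0, 1)`
forward to `μ`, so the quantile functions of integrable random variables are integrable and `l`
is a primitive of `h`.
Between two consecutive discontinuities of `sign ∘ h` the function `h` is either positive or
nonpositive, so `l` is strictly increasing or antitone there. On such a piece `(b, c]` the record
set `A` is either empty or an interval `(s, c]` with `l s` equal to the running maximum at `b`;
either way `∫ h` over it is exactly the increase of the running maximum of `l` from `b` to `c`.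
Summing over the finitely many pieces gives the identity.
-/

open Topology ProbabilityTheory

def cdfQuantile (μ : Measure ℝ) (p : ℝ) : ℝ :=
  sInf {η | p ≤ cdf μ η}

section Quantile

variable (μ : Measure ℝ)

lemma bddBelow_setOf_le_cdf {p : ℝ} (hp : 0 < p) : BddBelow {η | p ≤ cdf μ η} := by
  obtain ⟨η₀, hη₀⟩ := eventually_atBot.1 ((tendsto_cdf_atBot μ).eventually_lt_const hp)
  exact ⟨η₀, fun η hη => le_of_not_gt fun hlt => (hη₀ η hlt.le).not_ge hη⟩

lemma nonempty_setOf_le_cdf {p : ℝ} (hp : p < 1) : {η | p ≤ cdf μ η}.Nonempty :=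
  ((tendsto_cdf_atTop μ).eventually_const_lt hp).exists.imp fun _ => le_of_lt

lemma le_cdf_cdfQuantile {p : ℝ} (hp : p ∈ Ioo 0 1) : p ≤ cdf μ (cdfQuantile μ p) := by
  have hright : Tendsto (cdf μ) (𝓝[>] (cdfQuantile μ p)) (𝓝 (cdf μ (cdfQuantile μ p))) :=
    ((cdf μ).right_continuous _).mono Ioi_subset_Ici_self
  refine ge_of_tendsto hright ?_
  filter_upwards [self_mem_nhdsWithin] with y hy
  obtain ⟨η, hη, hηy⟩ := exists_lt_of_csInf_lt (nonempty_setOf_le_cdf μ hp.2) hy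
  exact hη.trans (monotone_cdf μ hηy.le)

lemma cdfQuantile_le_iff {p : ℝ} (hp : p ∈ Ioo 0 1) {η : ℝ} :
    cdfQuantile μ p ≤ η ↔ p ≤ cdf μ η :=
  ⟨fun h => (le_cdf_cdfQuantile μ hp).trans (monotone_cdf μ h),
    fun h => csInf_le (bddBelow_setOf_le_cdf μ hp.1) h⟩

lemma monotoneOn_cdfQuantile : MonotoneOn (cdfQuantile μ) (Ioo 0 1) :=
  fun _ hp _ hq hpq => (cdfQuantile_le_iff μ hp).2 (hpq.trans (le_cdf_cdfQuantile μ hq))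

variable [IsProbabilityMeasure μ]

lemma map_cdfQuantile : (volume.restrict (Ioo 0 1)).map (cdfQuantile μ) = μ := by
  have hmeas : AEMeasurable (cdfQuantile μ) (volume.restrict (Ioo 0 1)) :=
    aemeasurable_restrict_of_monotoneOn measurableSet_Ioo (monotoneOn_cdfQuantile μ)
  refine Measure.ext_of_Iic _ _ fun η => ?_
  have hpre : cdfQuantile μ ⁻¹' Iic η ∩ Ioo 0 1 = Iic (cdf μ η) ∩ Ioo 0 1 := by
    ext p
    exact and_congr_left fun hp => cdfQuantile_le_iff μ hp
  rw [Measure.map_apply_of_aemeasurable hmeas measurableSet_Iic,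
    Measure.restrict_apply' measurableSet_Ioo, hpre, ← ofReal_cdf]
  refine le_antisymm ?_ ?_
  · calc volume (Iic (cdf μ η) ∩ Ioo 0 1) ≤ volume (Ioc 0 (cdf μ η)) :=
          measure_mono fun p hp => ⟨hp.2.1, hp.1⟩
      _ = ENNReal.ofReal (cdf μ η) := by rw [Real.volume_Ioc, sub_zero]
  · calc ENNReal.ofReal (cdf μ η) = volume (Ioo 0 (cdf μ η)) := by
          rw [Real.volume_Ioo, sub_zero]
      _ ≤ volume (Iic (cdf μ η) ∩ Ioo 0 1) :=
          measure_mono fun p hp => ⟨hp.2.le, hp.1, hp.2.trans_le (cdf_le_one μ η)⟩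

lemma integrableOn_cdfQuantile (hμ : Integrable id μ) :
    IntegrableOn (cdfQuantile μ) (Ioc 0 1) := by
  have hmeas : AEMeasurable (cdfQuantile μ) (volume.restrict (Ioo 0 1)) :=
    aemeasurable_restrict_of_monotoneOn measurableSet_Ioo (monotoneOn_cdfQuantile μ)
  rw [← map_cdfQuantile μ] at hμ
  exact IntegrableOn.congr_set_ae
    ((integrable_map_measure aestronglyMeasurable_id hmeas).1 hμ) Ioo_ae_eq_Ioc.symm

end Quantile

section RandomVariable

variable {Ω : Type*} [MeasurableSpace Ω] (P : Measure Ω) [IsProbabilityMeasure P]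
  {Z : Ω → ℝ}

lemma cdfRV_eq_cdf_map (hZ : AEMeasurable Z P) : cdfRV P Z = cdf (P.map Z) := by
  have := Measure.isProbabilityMeasure_map hZ
  ext η
  rw [cdf_eq_real, measureReal_def, Measure.map_apply_of_aemeasurable hZ measurableSet_Iic]
  rfl

lemma qf_eq_cdfQuantile_map (hZ : AEMeasurable Z P) : qf P Z = cdfQuantile (P.map Z) := by
  ext p
  rw [qf, cdfRV_eq_cdf_map P hZ, cdfQuantile]

lemma integrableOn_qf (hZ : Integrable Z P) : IntegrableOn (qf P Z) (Ioc 0 1) := by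
  have := Measure.isProbabilityMeasure_map hZ.aemeasurable
  rw [qf_eq_cdfQuantile_map P hZ.aemeasurable]
  exact integrableOn_cdfQuantile _
    ((integrable_map_measure aestronglyMeasurable_id hZ.aemeasurable).2 hZ)

lemma intervalIntegrable_qf (hZ : Integrable Z P) {x : ℝ} (hx : x ∈ Icc 0 1) :
    IntervalIntegrable (qf P Z) volume 0 x :=
  (intervalIntegrable_iff_integrableOn_Ioc_of_le hx.1).2
    ((integrableOn_qf P hZ).mono_set (Ioc_subset_Ioc_right hx.2))

lemma lorenz_sub_lorenz {X Y : Ω → ℝ} (hX : Integrable X P) (hY : Integrable Y P) {x : ℝ}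
    (hx : x ∈ Icc 0 1) :
    lorenz P Y x - lorenz P X x = ∫ t in 0..x, (qf P Y t - qf P X t) :=
  (intervalIntegral.integral_sub (intervalIntegrable_qf P hY hx)
    (intervalIntegrable_qf P hX hx)).symm

end RandomVariable

def recordSet (l : ℝ → ℝ) : Set ℝ :=
  {p | 0 < p ∧ ∀ q ∈ Ico 0 p, l q < l p}

lemma pos_or_nonpos_of_continuousOn_sign {h : ℝ → ℝ} {s : Set ℝ} (hs : IsPreconnected s)
    (hsign : ContinuousOn (fun t => Real.sign (h t)) s) :
    (∀ t ∈ s, 0 < h t) ∨ ∀ t ∈ s, h t ≤ 0 := by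
  by_contra! hne
  obtain ⟨⟨t₀, ht₀, h₀⟩, ⟨t₁, ht₁, h₁⟩⟩ := hne
  have hhalf : (1 / 2 : ℝ) ∈ Icc (Real.sign (h t₀)) (Real.sign (h t₁)) := by
    rw [Real.sign_of_pos h₁]
    rcases h₀.lt_or_eq with hneg | hzero
    · rw [Real.sign_of_neg hneg]; norm_num
    · rw [hzero, Real.sign_zero]; norm_num
  obtain ⟨z, -, hz⟩ := hs.intermediate_value ht₀ ht₁ hsign hhalf
  change Real.sign (h z) = 1 / 2 at hz
  rcases Real.sign_apply_eq (h z) with h' | h' | h' <;> rw [h'] at hz <;> norm_num at hz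

section Primitive

variable {h l : ℝ → ℝ} {a b c : ℝ}

lemma sub_eq_integral_of_eq_primitive (hh : IntervalIntegrable h volume a c)
    (hl : ∀ x ∈ Icc a c, l x = ∫ t in a..x, h t) {x y : ℝ} (hx : x ∈ Icc a c)
    (hy : y ∈ Icc a c) :
    l y - l x = ∫ t in x..y, h t := by
  have hsub : ∀ z ∈ Icc a c, uIcc a z ⊆ uIcc a c := fun z hz =>
    uIcc_subset_uIcc_left (Icc_subset_uIcc hz)
  rw [hl x hx, hl y hy, intervalIntegral.integral_interval_sub_left (hh.mono_set (hsub y hy))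
    (hh.mono_set (hsub x hx))]

lemma strictMonoOn_or_antitoneOn_of_continuousOn_sign (hh : IntervalIntegrable h volume a c)
    (hl : ∀ x ∈ Icc a c, l x = ∫ t in a..x, h t) (hab : a ≤ b)
    (hsign : ContinuousOn (fun t => Real.sign (h t)) (Ioo b c)) :
    StrictMonoOn l (Icc b c) ∨ AntitoneOn l (Icc b c) := by
  have hsub : Icc b c ⊆ Icc a c := Icc_subset_Icc_left hab
  have hint : ∀ {x y}, x ∈ Icc b c → y ∈ Icc b c → IntervalIntegrable h volume x y :=
    fun hx hy => hh.mono_set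
      (uIcc_subset_uIcc (Icc_subset_uIcc (hsub hx)) (Icc_subset_uIcc (hsub hy)))
  rcases pos_or_nonpos_of_continuousOn_sign isPreconnected_Ioo hsign with hpos | hnonpos
  · refine Or.inl fun x hx y hy hxy => ?_
    have := intervalIntegral.intervalIntegral_pos_of_pos_on (hint hx hy)
      (fun t ht => hpos t ⟨hx.1.trans_lt ht.1, ht.2.trans_le hy.2⟩) hxy
    linarith [sub_eq_integral_of_eq_primitive hh hl (hsub hx) (hsub hy)]
  · refine Or.inr fun x hx y hy hxy => ?_
    have := intervalIntegral.integral_mono_on_of_le_Ioo hxy (hint hx hy) intervalIntegrable_const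
      (fun t ht => hnonpos t ⟨hx.1.trans_lt ht.1, ht.2.trans_le hy.2⟩)
    rw [intervalIntegral.integral_zero] at this
    linarith [sub_eq_integral_of_eq_primitive hh hl (hsub hx) (hsub hy)]

end Primitive

section Record

variable {l : ℝ → ℝ} {b c : ℝ}

lemma exists_recordSet_inter_Ioc_eq_Ioc (hb : 0 ≤ b) (hbc : b ≤ c)
    (hl : ContinuousOn l (Icc 0 c))
    (hmono : StrictMonoOn l (Icc b c) ∨ AntitoneOn l (Icc b c)) :
    ∃ s ∈ Icc b c, recordSet l ∩ Ioc b c = Ioc s c ∧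
      sSup (l '' Icc 0 c) = sSup (l '' Icc 0 b) + (l c - l s) := by
  obtain ⟨q₀, hq₀, hmax⟩ :=
    isCompact_Icc.exists_isMaxOn (nonempty_Icc.2 hb) (hl.mono (Icc_subset_Icc_right hbc))
  have hMb : sSup (l '' Icc 0 b) = l q₀ :=
    IsGreatest.csSup_eq ⟨mem_image_of_mem l hq₀, forall_mem_image.2 fun q hq => hmax hq⟩
  by_cases hle : ∀ q ∈ Ioc b c, l q ≤ l q₀
  · refine ⟨c, right_mem_Icc.2 hbc, ?_, ?_⟩
    · rw [Ioc_self]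
      exact eq_empty_of_forall_notMem fun q ⟨hrec, hq⟩ =>
        (hrec.2 q₀ ⟨hq₀.1, hq₀.2.trans_lt hq.1⟩).not_ge (hle q hq)
    · rw [sub_self, add_zero, hMb]
      refine IsGreatest.csSup_eq ⟨mem_image_of_mem l ⟨hq₀.1, hq₀.2.trans hbc⟩,
        forall_mem_image.2 fun q hq => ?_⟩
      rcases le_or_gt q b with hqb | hqb
      exacts [hmax ⟨hq.1, hqb⟩, hle q ⟨hqb, hq.2⟩]
  push Not at hle
  obtain ⟨q₁, hq₁, hlq₁⟩ := hle
  have hstrict : StrictMonoOn l (Icc b c) := hmono.resolve_right fun hanti =>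
    ((hanti ⟨le_rfl, hbc⟩ ⟨hq₁.1.le, hq₁.2⟩ hq₁.1.le).trans
      (hmax ⟨hb, le_rfl⟩)).not_gt hlq₁
  have hlc : l q₀ < l c :=
    hlq₁.trans_le (hstrict.monotoneOn ⟨hq₁.1.le, hq₁.2⟩ ⟨hbc, le_rfl⟩ hq₁.2)
  -- `s` is where `l`, increasing on `[b, c]`, climbs back to the old maximum `l q₀`
  obtain ⟨s, hs, hls⟩ := intermediate_value_Icc hbc (hl.mono (Icc_subset_Icc_left hb))
    ⟨hmax ⟨hb, le_rfl⟩, hlc.le⟩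
  refine ⟨s, hs, ?_, ?_⟩
  · ext q
    constructor
    · rintro ⟨hrec, hq⟩
      refine ⟨lt_of_not_ge fun hqs => ?_, hq.2⟩
      have := hrec.2 q₀ ⟨hq₀.1, hq₀.2.trans_lt hq.1⟩
      have := hstrict.monotoneOn ⟨hq.1.le, hq.2⟩ hs hqs
      linarith
    · rintro ⟨hsq, hqc⟩
      have hbq : b < q := hs.1.trans_lt hsq
      refine ⟨⟨hb.trans_lt hbq, fun q' hq' => ?_⟩, hbq, hqc⟩
      rcases le_or_gt q' b with hq'b | hq'b
      · calc l q' ≤ l q₀ := hmax ⟨hq'.1, hq'b⟩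
          _ = l s := hls.symm
          _ < l q := hstrict hs ⟨hbq.le, hqc⟩ hsq
      · exact hstrict ⟨hq'b.le, hq'.2.le.trans hqc⟩ ⟨hbq.le, hqc⟩ hq'.2
  · rw [hMb, hls, add_sub_cancel]
    refine IsGreatest.csSup_eq ⟨mem_image_of_mem l ⟨hb.trans hbc, le_rfl⟩,
      forall_mem_image.2 fun q hq => ?_⟩
    rcases le_or_gt q b with hqb | hqb
    exacts [(hmax ⟨hq.1, hqb⟩).trans hlc.le,
      hstrict.monotoneOn ⟨hqb.le, hq.2⟩ ⟨hbc, le_rfl⟩ hq.2]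

end Record

section RecordIntegral

variable {h l : ℝ → ℝ}

lemma integral_recordSet_inter_Ioc_step {b c : ℝ} (hh : IntegrableOn h (Ioc 0 c))
    (hl : ∀ x ∈ Icc 0 c, l x = ∫ t in 0..x, h t) (hb : 0 ≤ b) (hbc : b ≤ c)
    (hsign : ContinuousOn (fun t => Real.sign (h t)) (Ioo b c))
    (hrec : MeasurableSet (recordSet l ∩ Ioc 0 b) ∧
      ∫ t in recordSet l ∩ Ioc 0 b, h t = sSup (l '' Icc 0 b)) :
    MeasurableSet (recordSet l ∩ Ioc 0 c) ∧
      ∫ t in recordSet l ∩ Ioc 0 c, h t = sSup (l '' Icc 0 c) := by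
  have hc : 0 ≤ c := hb.trans hbc
  have hhi : IntervalIntegrable h volume 0 c :=
    (intervalIntegrable_iff_integrableOn_Ioc_of_le hc).2 hh
  have hcont : ContinuousOn l (Icc 0 c) := by
    have hIcc : IntegrableOn h (uIcc 0 c) := by
      rw [uIcc_of_le hc]
      exact hh.congr_set_ae Ioc_ae_eq_Icc.symm
    rw [← uIcc_of_le hc] at hl ⊢
    exact (intervalIntegral.continuousOn_primitive_interval hIcc).congr hl
  obtain ⟨s, hs, hset, hsup⟩ := exists_recordSet_inter_Ioc_eq_Ioc hb hbc hcont
    (strictMonoOn_or_antitoneOn_of_continuousOn_sign hhi hl hb hsign)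
  have hsplit : recordSet l ∩ Ioc 0 c = recordSet l ∩ Ioc 0 b ∪ Ioc s c := by
    rw [← hset, ← inter_union_distrib_left, Ioc_union_Ioc_eq_Ioc hb hbc]
  have hdisj : Disjoint (recordSet l ∩ Ioc 0 b) (Ioc s c) :=
    disjoint_left.2 fun t ht ht' => (ht.2.2.trans hs.1).not_gt ht'.1
  have hinc : ∫ t in Ioc s c, h t = l c - l s := by
    rw [sub_eq_integral_of_eq_primitive hhi hl ⟨hb.trans hs.1, hs.2⟩ ⟨hc, le_rfl⟩,
      intervalIntegral.integral_of_le hs.2]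
  refine ⟨hsplit ▸ hrec.1.union measurableSet_Ioc, ?_⟩
  rw [hsplit, setIntegral_union hdisj measurableSet_Ioc
    (hh.mono_set fun t ht => Ioc_subset_Ioc_right hbc ht.2)
    (hh.mono_set (Ioc_subset_Ioc_left (hb.trans hs.1))), hrec.2, hinc, hsup]

theorem integral_recordSet_inter_Ioc (S : Finset ℝ) {p : ℝ} (hp : 0 ≤ p)
    (hh : IntegrableOn h (Ioc 0 p)) (hl : ∀ x ∈ Icc 0 p, l x = ∫ t in 0..x, h t)
    (hS : ∀ t ∈ Ioo 0 p, t ∉ S → ContinuousAt (fun t => Real.sign (h t)) t) :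
    MeasurableSet (recordSet l ∩ Ioc 0 p) ∧
      ∫ t in recordSet l ∩ Ioc 0 p, h t = sSup (l '' Icc 0 p) := by
  have hzero : MeasurableSet (recordSet l ∩ Ioc 0 0) ∧
      ∫ t in recordSet l ∩ Ioc 0 0, h t = sSup (l '' Icc 0 0) := by
    rw [Ioc_self, inter_empty, Icc_self, image_singleton, csSup_singleton, hl 0 ⟨le_rfl, hp⟩,
      intervalIntegral.integral_same]
    exact ⟨MeasurableSet.empty, setIntegral_empty⟩
  induction S using Finset.induction_on_max generalizing p with
  | empty =>
    exact integral_recordSet_inter_Ioc_step hh hl le_rfl hp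
      (fun t ht => (hS t ht (Finset.notMem_empty t)).continuousWithinAt) hzero
  | insert a S hlt ih =>
    have hnotMem : ∀ t, t ≠ a → t ∉ S → t ∉ insert a S := fun t hta htS => by
      simp [hta, htS]
    by_cases ha : a ∈ Ioo 0 p
    · refine integral_recordSet_inter_Ioc_step hh hl ha.1.le ha.2.le
        (fun t ht => (hS t ⟨ha.1.trans ht.1, ht.2⟩ (hnotMem t ht.1.ne'
          fun htS => (hlt t htS).not_gt ht.1)).continuousWithinAt)
        (ih ha.1.le (hh.mono_set (Ioc_subset_Ioc_right ha.2.le))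
          (fun x hx => hl x ⟨hx.1, hx.2.trans ha.2.le⟩)
          fun t ht htS => hS t ⟨ht.1, ht.2.trans ha.2⟩ (hnotMem t ht.2.ne htS))
    · exact ih hp hh hl fun t ht htS => hS t ht (hnotMem t (fun hta => ha (hta ▸ ht)) htS)

end RecordIntegral

/-- under the finitely-many-sign-changes assumption,
`∫_{A ∩ (0,p]} h(t) dt = sup_{q ∈ [0,p]} l(q)` for every `p ∈ [0,1]`; in particular for `p = 1`. -/
theorem stmt17 {Ω : Type*} [MeasurableSpace Ω] (P : Measure Ω) [IsProbabilityMeasure P]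
    (X Y : Ω → ℝ) (hX : Integrable X P) (hY : Integrable Y P)
    (h l : ℝ → ℝ)
    (hh : ∀ p, h p = qf P Y p - qf P X p)
    (hl : ∀ p, l p = lorenz P Y p - lorenz P X p)
    (A : Set ℝ)
    (hA : A = {p : ℝ | p ∈ Set.Ioc (0:ℝ) 1 ∧ ∀ q ∈ Set.Ico (0:ℝ) p, l q < l p})
    (hsign : {p : ℝ | p ∈ Set.Ioo (0:ℝ) 1 ∧
      ¬ ContinuousWithinAt (fun q => Real.sign (h q)) (Set.Ioo (0:ℝ) 1) p}.Finite) :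
    (∀ p ∈ Set.Icc (0:ℝ) 1,
      (∫ t in A ∩ Set.Ioc (0:ℝ) p, h t) = sSup (l '' Set.Icc (0:ℝ) p)) ∧
    (∫ t in A ∩ Set.Ioc (0:ℝ) 1, h t) = sSup (l '' Set.Icc (0:ℝ) 1) := by
  have hh' : IntegrableOn h (Ioc 0 1) := by
    rw [show h = qf P Y - qf P X from funext hh]
    exact (integrableOn_qf P hY).sub (integrableOn_qf P hX)
  have hl' : ∀ x ∈ Icc (0 : ℝ) 1, l x = ∫ t in 0..x, h t := fun x hx => by
    rw [hl, lorenz_sub_lorenz P hX hY hx]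
    simp only [hh]
  have hcont : ∀ t ∈ Ioo (0 : ℝ) 1, t ∉ hsign.toFinset →
      ContinuousAt (fun q => Real.sign (h q)) t := fun t ht htS =>
    (continuousWithinAt_iff_continuousAt (Ioo_mem_nhds ht.1 ht.2)).1
      (not_not.1 fun hnc => htS (hsign.mem_toFinset.2 ⟨ht, hnc⟩))
  have key : ∀ p ∈ Icc (0 : ℝ) 1, ∫ t in A ∩ Ioc 0 p, h t = sSup (l '' Icc 0 p) := by
    intro p hp
    have hAp : A ∩ Ioc 0 p = recordSet l ∩ Ioc 0 p := by
      rw [hA]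
      ext t
      exact ⟨fun ⟨⟨ht, hrec⟩, htp⟩ => ⟨⟨ht.1, hrec⟩, htp⟩,
        fun ⟨⟨ht, hrec⟩, htp⟩ => ⟨⟨⟨ht, htp.2.trans hp.2⟩, hrec⟩, htp⟩⟩
    rw [hAp]
    exact (integral_recordSet_inter_Ioc hsign.toFinset hp.1
      (hh'.mono_set (Ioc_subset_Ioc_right hp.2))
      (fun x hx => hl' x ⟨hx.1, hx.2.trans hp.2⟩)
      fun t ht => hcont t ⟨ht.1, ht.2.trans_le hp.2⟩).2
  exact ⟨key, key 1 ⟨zero_le_one, le_rfl⟩⟩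

end
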